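/- For every natural number n ≥ 1, t_3(n-1) = 2^{n+3} · (3 + n/2) · (35n² + 273n + 502) / (63 · (n-1)! · 720). -/

import Mathlib

/-!
Splitting off the last term of the defining sum gives the two-term recurrence
`t_{k+1}(n+1) = t_k(n+1) + t_{k+1}(n) / (k + 1 + (n+1)/2)`. Writing `t_k(n) = 2^n/n! · p_k(n)`,
it becomes `p_{k+1}(n+1) = p_k(n+1) + (n+1)/(2k+n+3) · p_{k+1}(n)` with `p_{k+1}(0) = 1`,
so each closed form `p_0 = 1`, `p_1`, `p_2`, `p_3` is checked by induction on `n` as a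
rational-function identity.
-/

/-- The coefficients `t_k(n)`: `t_k(0) = 1` and
`t_k(n) = ∑_{m=0}^{k} t_m(n-1)/(m + n/2)` for `n ≥ 1`. -/
noncomputable def t : ℕ → ℕ → ℝ
  | _, 0 => 1
  | k, n + 1 => ∑ m ∈ Finset.range (k + 1), t m n / ((m : ℝ) + ((n : ℝ) + 1) / 2)

lemma t_zero_right (k : ℕ) : t k 0 = 1 := by
  simp [t]

lemma t_succ_succ (k n : ℕ) :
    t (k + 1) (n + 1) = t k (n + 1) + t (k + 1) n / ((k + 1 : ℕ) + ((n : ℝ) + 1) / 2) := by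
  simp only [t, Finset.sum_range_succ _ (k + 1)]

lemma t_zero_left (n : ℕ) : t 0 n = 2 ^ n / n.factorial := by
  induction n with
  | zero => simp [t]
  | succ n ih =>
    simp only [t, zero_add, Finset.sum_range_one, Nat.cast_zero, ih, Nat.factorial_succ]
    push_cast
    field_simp
    ring

lemma t_succ_left_eq_of_recurrence {k : ℕ} {p q : ℕ → ℝ}
    (hq : ∀ n, t k n = 2 ^ n / n.factorial * q n) (hp0 : p 0 = 1)
    (hp : ∀ n, p (n + 1) = q (n + 1) + ((n : ℝ) + 1) / (2 * k + n + 3) * p n) :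
    ∀ n, t (k + 1) n = 2 ^ n / n.factorial * p n := by
  intro n
  induction n with
  | zero => simp [t_zero_right, hp0]
  | succ n ih =>
    rw [t_succ_succ, hq, ih, hp, Nat.factorial_succ]
    push_cast
    field_simp
    ring

lemma t_one (n : ℕ) : t 1 n = 2 ^ n / n.factorial * (((n : ℝ) + 3) / 3) := by
  revert n
  refine t_succ_left_eq_of_recurrence (k := 0) (q := fun _ => 1) (by simpa using t_zero_left) ?_ ?_
  · norm_num
  · intro n; push_cast; field_simp; ring

lemma t_two (n : ℕ) :
    t 2 n = 2 ^ n / n.factorial * ((5 * (n : ℝ) ^ 2 + 43 * n + 90) / 90) := by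
  revert n
  refine t_succ_left_eq_of_recurrence t_one ?_ ?_
  · norm_num
  · intro n; push_cast; field_simp; ring

lemma t_three (n : ℕ) :
    t 3 n = 2 ^ n / n.factorial * (((n : ℝ) + 7) * (35 * (n : ℝ) ^ 2 + 343 * n + 810) / 5670) := by
  revert n
  refine t_succ_left_eq_of_recurrence t_two ?_ ?_
  · norm_num
  · intro n; push_cast; field_simp; ring

/-- Equation (20) of the paper: for `n ≥ 1`,
`t_3(n-1) = 2^{n+3} · (3 + n/2) · (35n² + 273n + 502) / (63 · (n-1)! · 720)`. -/
theorem t_three_eq (n : ℕ) (hn : 1 ≤ n) :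
    t 3 (n - 1) =
      2 ^ (n + 3) * (3 + (n : ℝ) / 2) * (35 * (n : ℝ) ^ 2 + 273 * (n : ℝ) + 502) /
        (63 * (Nat.factorial (n - 1) : ℝ) * 720) := by
  obtain ⟨m, rfl⟩ := Nat.exists_eq_add_of_le' hn
  rw [Nat.add_sub_cancel, t_three, pow_add]
  push_cast
  field_simp
  ring
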